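/- arXiv:1310.2760 — 3 statements merged into one kernel-verified Lean document; each statement's English description precedes it below -/
import Mathlib

section
/- Let k be a circle with center O and radius R and ω a circle with center I and radius r in the Euclidean plane ℝ², with ω strictly inside k (dist(O,I) + r < R). Suppose that for some line t₀ tangent to ω and some t₀-pair (ω₁, ω₂), the three circles ω, ω₁, ω₂ have two distinct common external tangent lines. Then for every line t tangent to ω and every t-pair (ω₁, ω₂), the three circles ω, ω₁, ω₂ have two distinct common external tangent lines. -/
open RealInnerProductSpace

noncomputable section

/-- The Euclidean plane. -/
abbrev Pt := EuclideanSpace ℝ (Fin 2)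

/-- `L` is a line in the plane. -/
def IsLine (L : Set Pt) : Prop :=
  ∃ P v : Pt, v ≠ 0 ∧ L = {X | ∃ t : ℝ, X = P + t • v}

/-- The line `L` is tangent to the circle with center `P` and radius `ρ`:
the distance from `P` to `L` equals `ρ`. -/
def TangentTo (L : Set Pt) (P : Pt) (ρ : ℝ) : Prop := Metric.infDist P L = ρ

/-- All points of `S` lie strictly on the same side of the line `L`: there is a unit
normal `u` of `L` and a point `X₀ ∈ L` such that all signed distances `⟪X - X₀, u⟫`
for `X ∈ S` are strictly positive (choosing `-u` covers the other sign). -/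
def StrictSameSide (L : Set Pt) (S : Set Pt) : Prop :=
  ∃ u X₀ : Pt, ‖u‖ = 1 ∧ X₀ ∈ L ∧ (∀ X ∈ L, ∀ Y ∈ L, ⟪X - Y, u⟫ = 0) ∧
    ∀ P ∈ S, 0 < ⟪P - X₀, u⟫

/-- `L` is a common external tangent of the three circles `c₁, c₂, c₃`
(each given as a pair (center, radius)). -/
def IsCommonExternalTangent (L : Set Pt) (c₁ c₂ c₃ : Pt × ℝ) : Prop :=
  IsLine L ∧ TangentTo L c₁.1 c₁.2 ∧ TangentTo L c₂.1 c₂.2 ∧ TangentTo L c₃.1 c₃.2 ∧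
    StrictSameSide L {c₁.1, c₂.1, c₃.1}

/-- Given the outer circle `(O, R)`, the inner circle `(I, r)` and a line `t` tangent to the
inner circle, `(c₁, c₂)` is a `t`-pair: two distinct circles, each externally tangent to
`(I, r)`, internally tangent to `(O, R)`, tangent to `t`, with center strictly on the same
side of `t` as `I`. -/
def TPair (O : Pt) (R : ℝ) (I : Pt) (r : ℝ) (t : Set Pt) (c₁ c₂ : Pt × ℝ) : Prop :=
  c₁ ≠ c₂ ∧ 0 < c₁.2 ∧ 0 < c₂.2 ∧
  dist c₁.1 I = c₁.2 + r ∧ dist c₁.1 O = R - c₁.2 ∧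
  dist c₂.1 I = c₂.2 + r ∧ dist c₂.1 O = R - c₂.2 ∧
  TangentTo t c₁.1 c₁.2 ∧ TangentTo t c₂.1 c₂.2 ∧
  StrictSameSide t {I, c₁.1, c₂.1}

/-!
Write the tangent line `t` as `⟪u, X⟫ = c` with `ω` on the side `u` points to, and measure
abscissae along `J u` from `I`. A circle of radius `ρ` tangent to `t` and externally tangent
to `ω` has abscissa `ξ` with `ξ² = 4rρ`. A common external tangent other than `t` has unit
normal `b u + a J u` with `b ≠ 1`, and `m = a / (1 - b)` satisfies `m ξᵢ = ρᵢ - r`; for two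
distinct circles such an `m` exists iff `ξ₁ ξ₂ = -4r²`. Internal tangency to `k` makes `ξ₁, ξ₂`
the two roots of one quadratic, and by Vieta `ξ₁ ξ₂ = -4r²` becomes `|OI|² = R² - 2rR - 3r²`,
a condition in which `t` does not appear.
-/

instance : Fact (Module.finrank ℝ Pt = 2) := ⟨finrank_euclideanSpace_fin⟩

section Algebra

variable {r r₁ r₂ ξ₁ ξ₂ : ℝ}

theorem mul_eq_neg_four_mul_sq_of_slope {m : ℝ} (hE₁ : ξ₁ ^ 2 = 4 * r * r₁)
    (hE₂ : ξ₂ ^ 2 = 4 * r * r₂) (hξ : ξ₁ ≠ ξ₂) (hm₁ : m * ξ₁ = r₁ - r)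
    (hm₂ : m * ξ₂ = r₂ - r) : ξ₁ * ξ₂ = -4 * r ^ 2 := by
  have hsum : ξ₁ + ξ₂ = 4 * r * m := by
    have : (ξ₁ - ξ₂) * (ξ₁ + ξ₂ - 4 * r * m) = 0 := by
      linear_combination hE₁ - hE₂ - 4 * r * hm₁ + 4 * r * hm₂
    linarith [(mul_eq_zero.1 this).resolve_left (sub_ne_zero.2 hξ)]
  linear_combination ξ₁ * hsum - hE₁ + 4 * r * hm₁

theorem exists_slope_iff_mul_eq (hr : r ≠ 0) (hE₁ : ξ₁ ^ 2 = 4 * r * r₁)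
    (hE₂ : ξ₂ ^ 2 = 4 * r * r₂) (hξ : ξ₁ ≠ ξ₂) :
    (∃ m, m * ξ₁ = r₁ - r ∧ m * ξ₂ = r₂ - r) ↔ ξ₁ * ξ₂ = -4 * r ^ 2 := by
  refine ⟨fun ⟨m, hm₁, hm₂⟩ ↦ mul_eq_neg_four_mul_sq_of_slope hE₁ hE₂ hξ hm₁ hm₂, fun h ↦ ?_⟩
  refine ⟨(ξ₁ + ξ₂) / (4 * r), ?_, ?_⟩
  · field_simp
    linear_combination hE₁ + h
  · field_simp
    linear_combination hE₂ + h

variable {p h R : ℝ}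

theorem mul_eq_neg_four_mul_sq_iff (hr : 0 < r) (hA : 0 < 2 * r + R - h)
    (hE₁ : ξ₁ ^ 2 = 4 * r * r₁) (hE₂ : ξ₂ ^ 2 = 4 * r * r₂)
    (hC₁ : (ξ₁ - p) ^ 2 + (r₁ - h) ^ 2 = (R - r₁) ^ 2)
    (hC₂ : (ξ₂ - p) ^ 2 + (r₂ - h) ^ 2 = (R - r₂) ^ 2) (hξ : ξ₁ ≠ ξ₂) :
    ξ₁ * ξ₂ = -4 * r ^ 2 ↔ p ^ 2 + (h - r) ^ 2 = R ^ 2 - 2 * r * R - 3 * r ^ 2 := by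
  have hQ : ∀ ξ ρ, ξ ^ 2 = 4 * r * ρ → (ξ - p) ^ 2 + (ρ - h) ^ 2 = (R - ρ) ^ 2 →
      (2 * r + R - h) * ξ ^ 2 - 4 * p * r * ξ - 2 * r * (R ^ 2 - p ^ 2 - h ^ 2) = 0 :=
    fun ξ ρ hE hC ↦ by linear_combination 2 * r * hC + (R - h) * hE
  have hvieta : (2 * r + R - h) * (ξ₁ * ξ₂ + 4 * r ^ 2) =
      2 * r * (p ^ 2 + (h - r) ^ 2 - (R ^ 2 - 2 * r * R - 3 * r ^ 2)) := by
    have : (ξ₁ - ξ₂) * ((2 * r + R - h) * (ξ₁ * ξ₂) + 2 * r * (R ^ 2 - p ^ 2 - h ^ 2)) = 0 := by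
      linear_combination ξ₂ * hQ ξ₁ r₁ hE₁ hC₁ - ξ₁ * hQ ξ₂ r₂ hE₂ hC₂
    linear_combination (mul_eq_zero.1 this).resolve_left (sub_ne_zero.2 hξ)
  constructor <;> intro hprod
  · have : 2 * r * (p ^ 2 + (h - r) ^ 2 - (R ^ 2 - 2 * r * R - 3 * r ^ 2)) = 0 := by
      rw [← hvieta, hprod]; ring
    linarith [(mul_eq_zero.1 this).resolve_left (by positivity)]
  · have : (2 * r + R - h) * (ξ₁ * ξ₂ + 4 * r ^ 2) = 0 := by
      rw [hvieta, hprod]; ring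
    linarith [(mul_eq_zero.1 this).resolve_left hA.ne']

end Algebra

namespace Orientation

variable {E : Type*} [NormedAddCommGroup E] [InnerProductSpace ℝ E] [Fact (Module.finrank ℝ E = 2)]
  (o : Orientation ℝ E (Fin 2)) {u : E}

local notation "ω" => o.areaForm
local notation "J" => o.rightAngleRotation

theorem eq_inner_smul_add_areaForm_smul (hu : ‖u‖ = 1) (x : E) :
    x = ⟪u, x⟫ • u + ω u x • J u := by
  refine ext_inner_right ℝ fun y ↦ ?_
  simpa [hu, inner_add_left, inner_smul_left, real_inner_comm x] using
    (o.inner_mul_inner_add_areaForm_mul_areaForm u x y).symm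

theorem dist_sq_eq_of_inner_sub_eq (hu : ‖u‖ = 1) {P Q : E} {c a b : ℝ}
    (hP : ⟪u, P⟫ - c = a) (hQ : ⟪u, Q⟫ - c = b) :
    dist P Q ^ 2 = (a - b) ^ 2 + (ω u P - ω u Q) ^ 2 := by
  have := o.inner_sq_add_areaForm_sq u (P - Q)
  rw [hu, one_pow, one_mul, ← dist_eq_norm, inner_sub_right, map_sub] at this
  rw [← this, ← hP, ← hQ]
  ring

variable {c r ρ : ℝ} {I P : E}

theorem areaForm_sub_sq_eq_of_dist_eq_add (hu : ‖u‖ = 1) (hP : ⟪u, P⟫ - c = ρ)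
    (hI : ⟪u, I⟫ - c = r) (hd : dist P I = ρ + r) : ω u (P - I) ^ 2 = 4 * r * ρ := by
  have := o.dist_sq_eq_of_inner_sub_eq hu hP hI
  rw [hd] at this
  rw [map_sub]
  linear_combination -this

theorem areaForm_sub_sq_add_sq_eq_of_dist_eq_sub (hu : ‖u‖ = 1) {O : E} {h R : ℝ}
    (hP : ⟪u, P⟫ - c = ρ) (hO : ⟪u, O⟫ - c = h) (hd : dist P O = R - ρ) :
    (ω u (P - I) - (ω u O - ω u I)) ^ 2 + (ρ - h) ^ 2 = (R - ρ) ^ 2 := by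
  have := o.dist_sq_eq_of_inner_sub_eq hu hP hO
  rw [hd] at this
  rw [map_sub]
  linear_combination -this

theorem eq_of_areaForm_sub_eq (hu : ‖u‖ = 1) (hr : r ≠ 0) {P' : E} {ρ' : ℝ}
    (hP : ⟪u, P⟫ - c = ρ) (hP' : ⟪u, P'⟫ - c = ρ') (hE : ω u (P - I) ^ 2 = 4 * r * ρ)
    (hE' : ω u (P' - I) ^ 2 = 4 * r * ρ') (h : ω u (P - I) = ω u (P' - I)) :
    (P, ρ) = (P', ρ') := by
  have hρ : ρ = ρ' := mul_left_cancel₀ (mul_ne_zero four_ne_zero hr) (by rw [← hE, ← hE', h])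
  have hx : ω u P = ω u P' := by simpa [map_sub] using h
  have hd := o.dist_sq_eq_of_inner_sub_eq hu hP hP'
  rw [hρ, hx, sub_self, sub_self] at hd
  exact Prod.ext (dist_eq_zero.1 (by simpa using hd)) hρ

end Orientation

theorem infDist_setOf_inner_eq {E : Type*} [NormedAddCommGroup E] [InnerProductSpace ℝ E]
    {n : E} (hn : ‖n‖ = 1) (e : ℝ) (P : E) :
    Metric.infDist P {X | ⟪n, X⟫ = e} = |⟪n, P⟫ - e| := by
  have hfoot : P - (⟪n, P⟫ - e) • n ∈ {X | ⟪n, X⟫ = e} := by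
    simp [inner_sub_right, inner_smul_right, hn]
  refine le_antisymm ?_ ((Metric.le_infDist ⟨_, hfoot⟩).2 fun X (hX : ⟪n, X⟫ = e) ↦ ?_)
  · exact (Metric.infDist_le_dist_of_mem hfoot).trans_eq (by simp [norm_smul, hn])
  · calc |⟪n, P⟫ - e| = |⟪n, P - X⟫| := by rw [inner_sub_right, hX]
      _ ≤ ‖n‖ * ‖P - X‖ := abs_real_inner_le_norm _ _
      _ = dist P X := by rw [hn, one_mul, dist_eq_norm]

theorem IsLine.eq_setOf_inner_eq {L : Set Pt} (hL : IsLine L) {u X₀ : Pt} (hu : ‖u‖ = 1)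
    (hX₀ : X₀ ∈ L) (horth : ∀ X ∈ L, ∀ Y ∈ L, ⟪X - Y, u⟫ = 0) :
    L = {X | ⟪u, X⟫ = ⟪u, X₀⟫} := by
  obtain ⟨P, v, hv, rfl⟩ := hL
  obtain ⟨s, rfl⟩ := hX₀
  let o := (EuclideanSpace.basisFun (Fin 2) ℝ).toBasis.orientation
  have hvu : ⟪u, v⟫ = 0 := by
    simpa [real_inner_comm] using horth (P + (1 : ℝ) • v) ⟨1, rfl⟩ P ⟨0, by simp⟩
  set b := o.areaForm u v
  have hv' : v = b • o.rightAngleRotation u := by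
    simpa [hvu] using o.eq_inner_smul_add_areaForm_smul hu v
  have hb : b ≠ 0 := fun h ↦ hv (by simpa [h] using hv')
  ext X
  constructor
  · rintro ⟨t, rfl⟩
    simp [inner_add_right, inner_smul_right, hvu]
  · intro (hX : ⟪u, X⟫ = ⟪u, P + s • v⟫)
    set D := X - (P + s • v)
    have hD : D = o.areaForm u D • o.rightAngleRotation u := by
      have hDu : ⟪u, D⟫ = 0 := by rw [inner_sub_right, hX, sub_self]
      simpa [hDu] using o.eq_inner_smul_add_areaForm_smul hu D
    refine ⟨s + o.areaForm u D / b, ?_⟩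
    have : (o.areaForm u D / b) • v = D := by
      conv_lhs => rw [hv']
      rw [smul_smul, div_mul_cancel₀ _ hb, ← hD]
    rw [add_smul, ← add_assoc, this]
    simp only [D]
    abel

theorem isLine_setOf_inner_eq {n : Pt} (hn : ‖n‖ = 1) (e : ℝ) : IsLine {X | ⟪n, X⟫ = e} := by
  let o := (EuclideanSpace.basisFun (Fin 2) ℝ).toBasis.orientation
  have hJn : o.rightAngleRotation n ≠ 0 := by simpa using ne_zero_of_norm_ne_zero (hn ▸ one_ne_zero)
  have hline : IsLine {X | ∃ t : ℝ, X = e • n + t • o.rightAngleRotation n} := ⟨_, _, hJn, rfl⟩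
  have h := hline.eq_setOf_inner_eq hn (X₀ := e • n) ⟨0, by simp⟩ (by
    rintro _ ⟨t, rfl⟩ _ ⟨s, rfl⟩
    simp [← sub_smul, inner_smul_left])
  rw [inner_smul_right, real_inner_self_eq_norm_sq, hn, one_pow, mul_one] at h
  exact h ▸ hline

theorem StrictSameSide.exists_eq_setOf_inner_eq {L S : Set Pt} (hL : IsLine L)
    (h : StrictSameSide L S) :
    ∃ n e, ‖n‖ = 1 ∧ L = {X | ⟪n, X⟫ = e} ∧ ∀ P ∈ S, e < ⟪n, P⟫ := by
  obtain ⟨u, X₀, hu, hX₀, horth, hpos⟩ := h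
  refine ⟨u, ⟪u, X₀⟫, hu, hL.eq_setOf_inner_eq hu hX₀ horth, fun P hP ↦ ?_⟩
  have := hpos P hP
  rw [real_inner_comm, inner_sub_right] at this
  linarith

theorem IsCommonExternalTangent.exists_eq_setOf_inner_eq {L : Set Pt} {c₁ c₂ c₃ : Pt × ℝ}
    (h : IsCommonExternalTangent L c₁ c₂ c₃) :
    ∃ n e, ‖n‖ = 1 ∧ L = {X | ⟪n, X⟫ = e} ∧
      ⟪n, c₁.1⟫ - e = c₁.2 ∧ ⟪n, c₂.1⟫ - e = c₂.2 ∧ ⟪n, c₃.1⟫ - e = c₃.2 := by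
  obtain ⟨hL, h₁, h₂, h₃, hside⟩ := h
  obtain ⟨n, e, hn, rfl, hpos⟩ := hside.exists_eq_setOf_inner_eq hL
  have hdist : ∀ c : Pt × ℝ, c.1 ∈ ({c₁.1, c₂.1, c₃.1} : Set Pt) →
      TangentTo {X | ⟪n, X⟫ = e} c.1 c.2 → ⟪n, c.1⟫ - e = c.2 := fun c hc hc' ↦ by
    rw [← abs_of_pos (sub_pos.2 (hpos _ hc)), ← infDist_setOf_inner_eq hn]
    exact hc'
  exact ⟨n, e, hn, rfl, hdist c₁ (by simp) h₁, hdist c₂ (by simp) h₂, hdist c₃ (by simp) h₃⟩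

theorem isCommonExternalTangent_setOf_inner_eq {n : Pt} {e : ℝ} (hn : ‖n‖ = 1)
    {c₁ c₂ c₃ : Pt × ℝ} (hr₁ : 0 < c₁.2) (hr₂ : 0 < c₂.2) (hr₃ : 0 < c₃.2)
    (h₁ : ⟪n, c₁.1⟫ - e = c₁.2) (h₂ : ⟪n, c₂.1⟫ - e = c₂.2) (h₃ : ⟪n, c₃.1⟫ - e = c₃.2) :
    IsCommonExternalTangent {X | ⟪n, X⟫ = e} c₁ c₂ c₃ := by
  have hen : ⟪n, e • n⟫ = e := by simp [inner_smul_right, hn]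
  have htan : ∀ c : Pt × ℝ, 0 < c.2 → ⟪n, c.1⟫ - e = c.2 → TangentTo {X | ⟪n, X⟫ = e} c.1 c.2 :=
    fun c hc h ↦ by unfold TangentTo; rw [infDist_setOf_inner_eq hn, h, abs_of_pos hc]
  refine ⟨isLine_setOf_inner_eq hn e, htan _ hr₁ h₁, htan _ hr₂ h₂, htan _ hr₃ h₃,
    n, e • n, hn, hen, ?_, ?_⟩
  · intro X (hX : ⟪n, X⟫ = e) Y (hY : ⟪n, Y⟫ = e)
    rw [real_inner_comm, inner_sub_right, hX, hY, sub_self]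
  · rintro P (rfl | rfl | rfl) <;> rw [real_inner_comm, inner_sub_right, hen] <;> linarith

theorem TPair.isCommonExternalTangent {O I : Pt} {R r : ℝ} {t : Set Pt} {c₁ c₂ : Pt × ℝ}
    (hpair : TPair O R I r t c₁ c₂) (hline : IsLine t) (htan : TangentTo t I r) :
    IsCommonExternalTangent t (I, r) c₁ c₂ := by
  obtain ⟨-, -, -, -, -, -, -, h₁, h₂, hside⟩ := hpair
  exact ⟨hline, htan, h₁, h₂, hside⟩

section TangentFrame

variable (o : Orientation ℝ Pt (Fin 2)) {u I : Pt} {c r : ℝ} {c₁ c₂ : Pt × ℝ}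

local notation "ω" => o.areaForm
local notation "J" => o.rightAngleRotation

theorem exists_slope_of_isCommonExternalTangent (hu : ‖u‖ = 1) (hI : ⟪u, I⟫ - c = r)
    (h₁ : ⟪u, c₁.1⟫ - c = c₁.2) (h₂ : ⟪u, c₂.1⟫ - c = c₂.2) {L : Set Pt}
    (hL : IsCommonExternalTangent L (I, r) c₁ c₂) (hLt : L ≠ {X | ⟪u, X⟫ = c}) :
    ∃ m, m * ω u (c₁.1 - I) = c₁.2 - r ∧ m * ω u (c₂.1 - I) = c₂.2 - r := by
  obtain ⟨n, e, hn, rfl, hIn, h₁n, h₂n⟩ := hL.exists_eq_setOf_inner_eq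
  dsimp only at hIn
  have hb : ⟪u, n⟫ ≠ 1 := by
    intro hb
    have hnu : n = u := by
      rw [← sub_eq_zero, ← norm_eq_zero, ← sq_eq_zero_iff, norm_sub_sq_real, hn, hu,
        real_inner_comm, hb]
      norm_num
    subst hnu
    exact hLt (by rw [show e = c by linarith])
  have hn_inner : ∀ z, ⟪n, z⟫ = ⟪u, n⟫ * ⟪u, z⟫ + ω u n * ω u z := fun z ↦ by
    simpa [hu] using (o.inner_mul_inner_add_areaForm_mul_areaForm u n z).symm
  have hslope : ∀ c' : Pt × ℝ, ⟪u, c'.1⟫ - c = c'.2 → ⟪n, c'.1⟫ - e = c'.2 →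
      ω u n / (1 - ⟪u, n⟫) * ω u (c'.1 - I) = c'.2 - r := fun c' hu' hn' ↦ by
    have := hn_inner (c'.1 - I)
    simp only [inner_sub_right, map_sub] at this ⊢
    rw [div_mul_eq_mul_div, div_eq_iff (sub_ne_zero.2 hb.symm)]
    linear_combination -this + hn' - hIn - ⟪u, n⟫ * (hu' - hI)
  exact ⟨_, hslope c₁ h₁ h₁n, hslope c₂ h₂ h₂n⟩

theorem exists_isCommonExternalTangent_of_slope (hr : 0 < r) (hr₁ : 0 < c₁.2) (hr₂ : 0 < c₂.2)
    (hu : ‖u‖ = 1) (hI : ⟪u, I⟫ - c = r) (h₁ : ⟪u, c₁.1⟫ - c = c₁.2) (h₂ : ⟪u, c₂.1⟫ - c = c₂.2)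
    {m : ℝ} (hm₁ : m * ω u (c₁.1 - I) = c₁.2 - r) (hm₂ : m * ω u (c₂.1 - I) = c₂.2 - r) :
    ∃ L, L ≠ {X | ⟪u, X⟫ = c} ∧ IsCommonExternalTangent L (I, r) c₁ c₂ := by
  have hq : m ^ 2 + 1 ≠ 0 := by positivity
  -- rational parametrization of the unit circle, with `a / (1 - b) = m`
  set b := (m ^ 2 - 1) / (m ^ 2 + 1)
  set a := 2 * m / (m ^ 2 + 1)
  set n := b • u + a • J u
  have hn_inner : ∀ z, ⟪n, z⟫ = b * ⟪u, z⟫ + a * ω u z := fun z ↦ by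
    simp [n, inner_add_left, inner_smul_left, o.inner_rightAngleRotation_left]
  have hb : b ≠ 1 := by
    rw [Ne, div_eq_one_iff_eq hq]
    linarith
  have hn : ‖n‖ = 1 := by
    have hab : b ^ 2 + a ^ 2 = 1 := by
      simp only [b, a]
      field_simp
      ring
    refine (pow_eq_one_iff_of_nonneg (norm_nonneg n) two_ne_zero).1 ?_
    rw [← real_inner_self_eq_norm_sq, hn_inner]
    simpa [n, inner_add_right, inner_smul_right, hu, ← sq] using hab
  have htan : ∀ c' : Pt × ℝ, ⟪u, c'.1⟫ - c = c'.2 → m * ω u (c'.1 - I) = c'.2 - r →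
      ⟪n, c'.1⟫ - (⟪n, I⟫ - r) = c'.2 := fun c' hu' hm' ↦ by
    have := hn_inner (c'.1 - I)
    have hξ : a * ω u (c'.1 - I) = (1 - b) * (c'.2 - r) := by
      simp only [a, b]
      field_simp
      linear_combination 2 * hm'
    simp only [inner_sub_right] at this
    linear_combination this + hξ + b * (hu' - hI)
  refine ⟨{X | ⟪n, X⟫ = ⟪n, I⟫ - r}, fun hLt ↦ hb ?_,
    isCommonExternalTangent_setOf_inner_eq hn hr hr₁ hr₂ (by ring) (htan c₁ h₁ hm₁)
      (htan c₂ h₂ hm₂)⟩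
  have hfoot : I - r • u ∈ {X | ⟪n, X⟫ = ⟪n, I⟫ - r} := by
    rw [hLt]
    change ⟪u, I - r • u⟫ = c
    rw [inner_sub_right, real_inner_smul_right, real_inner_self_eq_norm_sq, hu]
    linarith
  have hnu : ⟪n, u⟫ = b := by
    rw [hn_inner, real_inner_self_eq_norm_sq, hu, o.areaForm_apply_self]
    ring
  change ⟪n, I - r • u⟫ = _ at hfoot
  rw [inner_sub_right, real_inner_smul_right, hnu] at hfoot
  exact mul_left_cancel₀ hr.ne' (by linarith : r * b = r * 1)

theorem exists_two_commonExternalTangents_iff_exists_slope (hr : 0 < r) (hr₁ : 0 < c₁.2)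
    (hr₂ : 0 < c₂.2) (hu : ‖u‖ = 1) (hI : ⟪u, I⟫ - c = r) (h₁ : ⟪u, c₁.1⟫ - c = c₁.2)
    (h₂ : ⟪u, c₂.1⟫ - c = c₂.2) :
    (∃ u₁ u₂ : Set Pt, u₁ ≠ u₂ ∧
      IsCommonExternalTangent u₁ (I, r) c₁ c₂ ∧ IsCommonExternalTangent u₂ (I, r) c₁ c₂) ↔
    ∃ m, m * ω u (c₁.1 - I) = c₁.2 - r ∧ m * ω u (c₂.1 - I) = c₂.2 - r := by
  constructor
  · rintro ⟨u₁, u₂, hne, hu₁, hu₂⟩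
    by_cases ht : u₁ = {X | ⟪u, X⟫ = c}
    · exact exists_slope_of_isCommonExternalTangent o hu hI h₁ h₂ hu₂ (ht ▸ hne).symm
    · exact exists_slope_of_isCommonExternalTangent o hu hI h₁ h₂ hu₁ ht
  · rintro ⟨m, hm₁, hm₂⟩
    obtain ⟨L, hLt, hL⟩ := exists_isCommonExternalTangent_of_slope o hr hr₁ hr₂ hu hI h₁ h₂ hm₁ hm₂
    exact ⟨_, L, hLt.symm, isCommonExternalTangent_setOf_inner_eq hu hr hr₁ hr₂ hI h₁ h₂, hL⟩

end TangentFrame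

theorem TPair.exists_two_commonExternalTangents_iff {O I : Pt} {R r : ℝ} (hr : 0 < r)
    (hinside : dist O I + r < R) {t : Set Pt} (hline : IsLine t) (htan : TangentTo t I r)
    {c₁ c₂ : Pt × ℝ} (hpair : TPair O R I r t c₁ c₂) :
    (∃ u₁ u₂ : Set Pt, u₁ ≠ u₂ ∧
      IsCommonExternalTangent u₁ (I, r) c₁ c₂ ∧ IsCommonExternalTangent u₂ (I, r) c₁ c₂) ↔
    dist O I ^ 2 = R ^ 2 - 2 * r * R - 3 * r ^ 2 := by
  let o := (EuclideanSpace.basisFun (Fin 2) ℝ).toBasis.orientation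
  obtain ⟨u, c, hu, rfl, hI, h₁, h₂⟩ :=
    (hpair.isCommonExternalTangent hline htan).exists_eq_setOf_inner_eq
  obtain ⟨hne, hr₁, hr₂, hd₁I, hd₁O, hd₂I, hd₂O, -⟩ := hpair
  dsimp only at hI
  have hO : ⟪u, O⟫ - c = ⟪u, O⟫ - c := rfl
  have hE₁ := o.areaForm_sub_sq_eq_of_dist_eq_add hu h₁ hI hd₁I
  have hE₂ := o.areaForm_sub_sq_eq_of_dist_eq_add hu h₂ hI hd₂I
  have hC₁ := o.areaForm_sub_sq_add_sq_eq_of_dist_eq_sub (I := I) hu h₁ hO hd₁O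
  have hC₂ := o.areaForm_sub_sq_add_sq_eq_of_dist_eq_sub (I := I) hu h₂ hO hd₂O
  have hξ : o.areaForm u (c₁.1 - I) ≠ o.areaForm u (c₂.1 - I) :=
    fun h ↦ hne (o.eq_of_areaForm_sub_eq hu hr.ne' h₁ h₂ hE₁ hE₂ h)
  have hOI := o.dist_sq_eq_of_inner_sub_eq hu hO hI
  have hA : 0 < 2 * r + R - (⟪u, O⟫ - c) := by
    have := (abs_le_of_sq_le_sq' (a := ⟪u, O⟫ - c - r) (by nlinarith) dist_nonneg).2
    linarith
  rw [exists_two_commonExternalTangents_iff_exists_slope o hr hr₁ hr₂ hu hI h₁ h₂,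
    exists_slope_iff_mul_eq hr.ne' hE₁ hE₂ hξ, mul_eq_neg_four_mul_sq_iff hr hA hE₁ hE₂ hC₁ hC₂ hξ,
    hOI, add_comm]

theorem sangaku_two_tangents_invariant_general
    (O I : Pt) (R r : ℝ) (hr : 0 < r)
    (hinside : dist O I + r < R)
    (h : ∃ t₀ : Set Pt, IsLine t₀ ∧ TangentTo t₀ I r ∧
      ∃ c₁ c₂ : Pt × ℝ, TPair O R I r t₀ c₁ c₂ ∧
        ∃ u₁ u₂ : Set Pt, u₁ ≠ u₂ ∧
          IsCommonExternalTangent u₁ (I, r) c₁ c₂ ∧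
          IsCommonExternalTangent u₂ (I, r) c₁ c₂) :
    ∀ t : Set Pt, IsLine t → TangentTo t I r →
      ∀ c₁ c₂ : Pt × ℝ, TPair O R I r t c₁ c₂ →
        ∃ u₁ u₂ : Set Pt, u₁ ≠ u₂ ∧
          IsCommonExternalTangent u₁ (I, r) c₁ c₂ ∧
          IsCommonExternalTangent u₂ (I, r) c₁ c₂ := by
  obtain ⟨t₀, hline₀, htan₀, c₁₀, c₂₀, hpair₀, htangents₀⟩ := h
  have hinv := (hpair₀.exists_two_commonExternalTangents_iff hr hinside hline₀ htan₀).1 htangents₀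
  intro t hline htan c₁ c₂ hpair
  exact (hpair.exists_two_commonExternalTangents_iff hr hinside hline htan).2 hinv

/-- **Theorem 1 (Sangaku closure).** If for some tangent line `t₀` of `ω` and some
`t₀`-pair the three circles `ω, ω₁, ω₂` have two distinct common external tangents, then
the same holds for every tangent line `t` of `ω` and every `t`-pair. -/
theorem sangaku_two_tangents_invariant
    (O I : Pt) (R r : ℝ) (hr : 0 < r) (hR : 0 < R)
    (hinside : dist O I + r < R)
    (h : ∃ t₀ : Set Pt, IsLine t₀ ∧ TangentTo t₀ I r ∧
      ∃ c₁ c₂ : Pt × ℝ, TPair O R I r t₀ c₁ c₂ ∧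
        ∃ u₁ u₂ : Set Pt, u₁ ≠ u₂ ∧
          IsCommonExternalTangent u₁ (I, r) c₁ c₂ ∧
          IsCommonExternalTangent u₂ (I, r) c₁ c₂) :
    ∀ t : Set Pt, IsLine t → TangentTo t I r →
      ∀ c₁ c₂ : Pt × ℝ, TPair O R I r t c₁ c₂ →
        ∃ u₁ u₂ : Set Pt, u₁ ≠ u₂ ∧
          IsCommonExternalTangent u₁ (I, r) c₁ c₂ ∧
          IsCommonExternalTangent u₂ (I, r) c₁ c₂ :=
  sangaku_two_tangents_invariant_general O I R r hr hinside h
end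
end

section
/- Let k be a circle with center O and radius R and ω a circle with center I and radius r in the Euclidean plane ℝ², with ω strictly inside k (dist(O,I) + r < R). Let ω₁ = (J₁, r₁) and ω₂ = (J₂, r₂) be two distinct circles inscribed in the annulus between ω and k, and let A and B be their respective points of tangency with ω (the unique point on segment I Jᵢ at distance r from I). Then ω, ω₁, ω₂ have two distinct common external tangent lines if and only if A and B are antipodal points of ω (that is, A + B = 2·I) and r₁ · r₂ = r². -/
open RealInnerProductSpace

noncomputable section

/-!
A common external tangent of the three circles is determined by its unit normal `u` pointing
towards the centres, and it is tangent to `(Jᵢ, rᵢ)` exactly when `⟪Jᵢ - I, u⟫ = rᵢ - r`.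
Two distinct tangents give two distinct normals `u ≠ u'`; then `J₁ - I` and `J₂ - I` are both
orthogonal to `u - u'`, hence parallel in the plane: `J₂ - I = t • (J₁ - I)`. Comparing lengths
(`rᵢ + r`) and projections on `u` (`rᵢ - r`) leaves `t = 1` (the same circle) or `t < 0` with
`r₂ = -t r` and `r = -t r₁`, which is antipodality together with `r₁ r₂ = r²`. Conversely, under
these two conditions the constraint on `J₂` follows from the one on `J₁`, and
`⟪J₁ - I, u⟫ = r₁ - r` has two unit solutions because `|r₁ - r| < r₁ + r`.
-/

open Module

section InnerProductSpace

variable {E : Type*} [NormedAddCommGroup E] [InnerProductSpace ℝ E]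

theorem setOf_inner_sub_eq_zero_congr {u X₀ X₁ : E} (h : ⟪X₁ - X₀, u⟫ = 0) :
    {X | ⟪X - X₀, u⟫ = 0} = {X | ⟪X - X₁, u⟫ = 0} := by
  ext X
  rw [Set.mem_ofPred_eq, Set.mem_ofPred_eq, ← sub_sub_sub_cancel_right X X₁ X₀,
    inner_sub_left (X - X₀), h, sub_zero]

theorem infDist_setOf_inner_sub_eq_zero {u : E} (hu : ‖u‖ = 1) (X₀ Q : E) :
    Metric.infDist Q {X | ⟪X - X₀, u⟫ = 0} = |⟪Q - X₀, u⟫| := by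
  set c := ⟪Q - X₀, u⟫
  have hfoot : Q - c • u ∈ {X | ⟪X - X₀, u⟫ = 0} := by
    rw [Set.mem_ofPred_eq, sub_right_comm, inner_sub_left, real_inner_smul_left,
      real_inner_self_eq_norm_sq, hu]
    ring
  refine le_antisymm ?_ ((Metric.le_infDist ⟨_, hfoot⟩).2 fun X hX => ?_)
  · calc Metric.infDist Q _ ≤ dist Q (Q - c • u) := Metric.infDist_le_dist_of_mem hfoot
      _ = |c| := by rw [dist_eq_norm, sub_sub_cancel, norm_smul, hu, mul_one, Real.norm_eq_abs]
  · calc |c| = |⟪Q - X, u⟫| := by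
          rw [← sub_sub_sub_cancel_right Q X X₀, inner_sub_left, Set.mem_ofPred.1 hX, sub_zero]
      _ ≤ ‖Q - X‖ * ‖u‖ := abs_real_inner_le_norm _ _
      _ = dist Q X := by rw [hu, mul_one, dist_eq_norm]

theorem exists_smul_eq_of_inner_eq_zero (hE : finrank ℝ E = 2) {u v w : E} (hu : u ≠ 0)
    (hv : v ≠ 0) (hvu : ⟪v, u⟫ = 0) (hwu : ⟪w, u⟫ = 0) : ∃ t : ℝ, t • v = w := by
  have : Fact (finrank ℝ E = 1 + 1) := ⟨hE⟩
  have hv' : (⟨v, Submodule.mem_orthogonal_singleton_iff_inner_left.2 hvu⟩ : (ℝ ∙ u)ᗮ) ≠ 0 := by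
    simpa using hv
  obtain ⟨t, ht⟩ := (finrank_eq_one_iff_of_nonzero' _ hv').1
    (Submodule.finrank_orthogonal_span_singleton (𝕜 := ℝ) hu)
    ⟨w, Submodule.mem_orthogonal_singleton_iff_inner_left.2 hwu⟩
  exact ⟨t, congrArg Subtype.val ht⟩

theorem exists_norm_eq_one_inner_eq_zero (hE : finrank ℝ E = 2) {v : E} (hv : v ≠ 0) :
    ∃ f : E, ‖f‖ = 1 ∧ ⟪v, f⟫ = 0 := by
  have : Fact (finrank ℝ E = 1 + 1) := ⟨hE⟩
  have : FiniteDimensional ℝ E := Module.finite_of_finrank_eq_succ hE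
  have h1 : finrank ℝ (ℝ ∙ v)ᗮ = 1 := Submodule.finrank_orthogonal_span_singleton hv
  obtain ⟨⟨x, hx⟩, hx0⟩ := finrank_pos_iff_exists_ne_zero.1 (h1 ▸ Nat.one_pos)
  have hx0 : x ≠ 0 := by simpa using hx0
  refine ⟨‖x‖⁻¹ • x, norm_smul_inv_norm hx0, ?_⟩
  rw [real_inner_smul_right, Submodule.mem_orthogonal_singleton_iff_inner_right.1 hx, mul_zero]

theorem setOf_line_eq_setOf_inner_sub_eq_zero (hE : finrank ℝ E = 2) {P u v : E} (hu : u ≠ 0)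
    (hv : v ≠ 0) (hvu : ⟪v, u⟫ = 0) : {X | ∃ t : ℝ, X = P + t • v} = {X | ⟪X - P, u⟫ = 0} := by
  ext X
  constructor
  · rintro ⟨t, rfl⟩
    rw [Set.mem_ofPred_eq, add_sub_cancel_left, real_inner_smul_left, hvu, mul_zero]
  · intro hX
    obtain ⟨t, ht⟩ := exists_smul_eq_of_inner_eq_zero hE hu hv hvu hX
    exact ⟨t, by rw [ht, add_sub_cancel]⟩

theorem exists_ne_norm_eq_one_inner_eq (hE : finrank ℝ E = 2) {v : E} {c : ℝ} (hc : |c| < ‖v‖) :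
    ∃ u u' : E, u ≠ u' ∧ ‖u‖ = 1 ∧ ‖u'‖ = 1 ∧ ⟪v, u⟫ = c ∧ ⟪v, u'⟫ = c := by
  have hv : v ≠ 0 := norm_pos_iff.1 ((abs_nonneg c).trans_lt hc)
  obtain ⟨f, hf, hvf⟩ := exists_norm_eq_one_inner_eq_zero hE hv
  have hunit : ∀ s : ℝ, (c / ‖v‖) ^ 2 + s ^ 2 = 1 →
      ‖(c / ‖v‖ ^ 2) • v + s • f‖ = 1 ∧ ⟪v, (c / ‖v‖ ^ 2) • v + s • f⟫ = c := by
    intro s hs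
    have hperp : ⟪(c / ‖v‖ ^ 2) • v, s • f⟫ = 0 := by
      rw [real_inner_smul_left, real_inner_smul_right, hvf, mul_zero, mul_zero]
    constructor
    · refine (pow_eq_one_iff_of_nonneg (norm_nonneg _) two_ne_zero).1 ?_
      rw [norm_add_sq_real, hperp, mul_zero, add_zero, norm_smul, norm_smul, hf, mul_one, ← hs]
      simp only [Real.norm_eq_abs, mul_pow, sq_abs]
      field_simp
    · rw [inner_add_right, real_inner_smul_right, real_inner_smul_right, hvf,
        real_inner_self_eq_norm_sq, mul_zero, add_zero]
      field_simp
  set b := √(1 - (c / ‖v‖) ^ 2)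
  have hlt : (c / ‖v‖) ^ 2 < 1 := by
    rw [div_pow, div_lt_one (by positivity), ← sq_abs]
    exact pow_lt_pow_left₀ hc (abs_nonneg c) two_ne_zero
  have hb : 0 < b := Real.sqrt_pos.2 (sub_pos.2 hlt)
  have hb2 : (c / ‖v‖) ^ 2 + b ^ 2 = 1 := by
    rw [Real.sq_sqrt (sub_pos.2 hlt).le]; ring
  obtain ⟨hu, hvu⟩ := hunit b hb2
  obtain ⟨hu', hvu'⟩ := hunit (-b) (by rwa [neg_sq])
  refine ⟨_, _, fun h => ?_, hu, hu', hvu, hvu'⟩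
  have hbf := sub_eq_zero.2 (add_left_cancel h)
  rw [← sub_smul, sub_neg_eq_add] at hbf
  rcases smul_eq_zero.1 hbf with h2 | h2
  · linarith
  · simp [h2] at hf

/-- For unit `u`, the tangent to the circle `(I, r)` at `I - r • u`; its normal `u` points
towards `I`. -/
def tangentLine (I : E) (r : ℝ) (u : E) : Set E := {X | ⟪X - (I - r • u), u⟫ = 0}

theorem inner_sub_sub_smul_of_norm_eq_one {u : E} (hu : ‖u‖ = 1) (C I : E) (r : ℝ) :
    ⟪C - (I - r • u), u⟫ = ⟪C - I, u⟫ + r := by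
  rw [sub_sub_eq_add_sub, add_sub_right_comm, inner_add_left, real_inner_smul_left,
    real_inner_self_eq_norm_sq, hu, one_pow, mul_one]

theorem tangentLine_injective {I u u' : E} {r : ℝ} (hr : r ≠ 0) (hu : ‖u‖ = 1) (hu' : ‖u'‖ = 1)
    (h : tangentLine I r u = tangentLine I r u') : u = u' := by
  have hmem : I - r • u ∈ tangentLine I r u' :=
    h ▸ (show I - r • u ∈ tangentLine I r u by simp [tangentLine])
  rw [tangentLine, Set.mem_ofPred_eq, inner_sub_sub_smul_of_norm_eq_one hu',
    sub_sub_cancel_left, inner_neg_left, real_inner_smul_left] at hmem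
  rw [← inner_eq_one_iff_of_norm_eq_one (𝕜 := ℝ) hu hu']
  exact mul_left_cancel₀ hr (by linarith)

theorem inner_eq_of_antipodal_of_mul_eq_sq {v₁ v₂ u : E} {r r₁ r₂ : ℝ} (hr : 0 < r)
    (hr₁ : 0 < r₁) (hr₂ : 0 < r₂) (hanti : (r / (r + r₁)) • v₁ + (r / (r + r₂)) • v₂ = 0)
    (hprod : r₁ * r₂ = r ^ 2) (h₁ : ⟪v₁, u⟫ = r₁ - r) : ⟪v₂, u⟫ = r₂ - r := by
  have h := congrArg (fun w : E => ⟪w, u⟫) hanti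
  simp only [inner_add_left, real_inner_smul_left, h₁, inner_zero_left] at h
  field_simp at h
  have : r * ((r + r₁) * (⟪v₂, u⟫ - (r₂ - r))) = 0 := by linear_combination h - 2 * r * hprod
  simpa [hr.ne', (by positivity : r + r₁ ≠ 0), sub_eq_zero] using this

theorem antipodal_and_mul_eq_sq_of_inner_eq (hE : finrank ℝ E = 2) {v₁ v₂ u u' : E}
    {r r₁ r₂ : ℝ} (hr : 0 < r) (hr₁ : 0 < r₁) (hv₁ : ‖v₁‖ = r₁ + r) (hv₂ : ‖v₂‖ = r₂ + r)
    (hne : (v₁, r₁) ≠ (v₂, r₂)) (huu' : u ≠ u') (h₁ : ⟪v₁, u⟫ = r₁ - r)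
    (h₁' : ⟪v₁, u'⟫ = r₁ - r) (h₂ : ⟪v₂, u⟫ = r₂ - r) (h₂' : ⟪v₂, u'⟫ = r₂ - r) :
    (r / (r + r₁)) • v₁ + (r / (r + r₂)) • v₂ = 0 ∧ r₁ * r₂ = r ^ 2 := by
  have hv₁0 : v₁ ≠ 0 := norm_pos_iff.1 (by linarith)
  obtain ⟨t, rfl⟩ := exists_smul_eq_of_inner_eq_zero hE (sub_ne_zero.2 huu') hv₁0
    (by rw [inner_sub_right, h₁, h₁', sub_self]) (by rw [inner_sub_right, h₂, h₂', sub_self])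
  rw [real_inner_smul_left, h₁] at h₂
  rw [norm_smul, Real.norm_eq_abs, hv₁] at hv₂
  rcases le_or_gt 0 t with ht | ht
  · rw [abs_of_nonneg ht] at hv₂
    have ht1 : r * (t - 1) = 0 := by linear_combination (hv₂ - h₂) / 2
    obtain rfl : t = 1 := by simpa [hr.ne', sub_eq_zero] using ht1
    exact absurd (by rw [one_smul, show r₂ = r₁ by linarith]) hne
  · rw [abs_of_neg ht] at hv₂
    have hr₂ : r₂ = -t * r := by linear_combination -(hv₂ + h₂) / 2
    have hr' : r = -t * r₁ := by linear_combination -(hv₂ - h₂) / 2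
    refine ⟨?_, by linear_combination r₁ * hr₂ - r * hr'⟩
    have : 0 < r + r₂ := by rw [hr₂]; nlinarith
    rw [smul_smul, ← add_smul]
    convert zero_smul ℝ v₁
    field_simp
    linear_combination -r * hv₂

end InnerProductSpace

theorem IsCommonExternalTangent.exists_eq_tangentLine {L : Set Pt} {I J₁ J₂ : Pt}
    {r r₁ r₂ : ℝ} (h : IsCommonExternalTangent L (I, r) (J₁, r₁) (J₂, r₂)) :
    ∃ u : Pt, ‖u‖ = 1 ∧ ⟪J₁ - I, u⟫ = r₁ - r ∧ ⟪J₂ - I, u⟫ = r₂ - r ∧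
      L = tangentLine I r u := by
  obtain ⟨⟨P, v, hv, rfl⟩, hI, h₁, h₂, u, X₀, hu, hX₀, hperp, hpos⟩ := h
  have hP : P ∈ {X | ∃ t : ℝ, X = P + t • v} := ⟨0, by rw [zero_smul, add_zero]⟩
  have hvu : ⟪v, u⟫ = 0 := by
    simpa using hperp (P + (1 : ℝ) • v) ⟨1, rfl⟩ P hP
  have hL : {X | ∃ t : ℝ, X = P + t • v} = {X | ⟪X - X₀, u⟫ = 0} := by
    rw [setOf_line_eq_setOf_inner_sub_eq_zero finrank_euclideanSpace_fin
      (norm_ne_zero_iff.1 (hu ▸ one_ne_zero)) hv hvu,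
      setOf_inner_sub_eq_zero_congr (hperp X₀ hX₀ P hP)]
  have hsigned : ∀ C ρ, Metric.infDist C {X | ∃ t : ℝ, X = P + t • v} = ρ →
      0 < ⟪C - X₀, u⟫ → ⟪C - X₀, u⟫ = ρ := by
    intro C ρ hC hpos
    rwa [hL, infDist_setOf_inner_sub_eq_zero hu, abs_of_pos hpos] at hC
  have sI := hsigned I r hI (hpos I (by simp))
  have s₁ := hsigned J₁ r₁ h₁ (hpos J₁ (by simp))
  have s₂ := hsigned J₂ r₂ h₂ (hpos J₂ (by simp))
  refine ⟨u, hu, ?_, ?_, ?_⟩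
  · rw [← sub_sub_sub_cancel_right J₁ I X₀, inner_sub_left, s₁, sI]
  · rw [← sub_sub_sub_cancel_right J₂ I X₀, inner_sub_left, s₂, sI]
  · rw [hL, tangentLine, setOf_inner_sub_eq_zero_congr]
    rw [sub_right_comm, inner_sub_left, sI, real_inner_smul_left, real_inner_self_eq_norm_sq, hu,
      one_pow, mul_one, sub_self]

theorem isCommonExternalTangent_tangentLine {I J₁ J₂ u : Pt} {r r₁ r₂ : ℝ} (hr : 0 < r)
    (hr₁ : 0 < r₁) (hr₂ : 0 < r₂) (hu : ‖u‖ = 1) (h₁ : ⟪J₁ - I, u⟫ = r₁ - r)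
    (h₂ : ⟪J₂ - I, u⟫ = r₂ - r) :
    IsCommonExternalTangent (tangentLine I r u) (I, r) (J₁, r₁) (J₂, r₂) := by
  have hu0 : u ≠ 0 := norm_ne_zero_iff.1 (hu ▸ one_ne_zero)
  have hdist : ∀ C, Metric.infDist C (tangentLine I r u) = |⟪C - I, u⟫ + r| := fun C => by
    rw [tangentLine, infDist_setOf_inner_sub_eq_zero hu, inner_sub_sub_smul_of_norm_eq_one hu]
  obtain ⟨f, hf, huf⟩ := exists_norm_eq_one_inner_eq_zero finrank_euclideanSpace_fin hu0
  have hf0 : f ≠ 0 := norm_ne_zero_iff.1 (hf ▸ one_ne_zero)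
  refine ⟨⟨I - r • u, f, hf0, (setOf_line_eq_setOf_inner_sub_eq_zero finrank_euclideanSpace_fin
    hu0 hf0 (real_inner_comm u f ▸ huf)).symm⟩, ?_, ?_, ?_, u, I - r • u, hu, ?_, ?_, ?_⟩
  · rw [TangentTo, hdist, sub_self, inner_zero_left, zero_add, abs_of_pos hr]
  · rw [TangentTo, hdist, h₁, sub_add_cancel, abs_of_pos hr₁]
  · rw [TangentTo, hdist, h₂, sub_add_cancel, abs_of_pos hr₂]
  · simp [tangentLine]
  · intro X hX Y hY
    rw [← sub_sub_sub_cancel_right X Y (I - r • u), inner_sub_left, Set.mem_ofPred.1 hX,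
      Set.mem_ofPred.1 hY, sub_self]
  · simp only [Set.mem_insert_iff, Set.mem_singleton_iff]
    rintro C (rfl | rfl | rfl) <;> rw [inner_sub_sub_smul_of_norm_eq_one hu]
    · rw [sub_self, inner_zero_left, zero_add]; exact hr
    · rw [h₁, sub_add_cancel]; exact hr₁
    · rw [h₂, sub_add_cancel]; exact hr₂

theorem two_tangents_iff_antipodal_and_product_general
    (I : Pt) (r : ℝ) (hr : 0 < r)
    (J₁ J₂ : Pt) (r₁ r₂ : ℝ) (hr₁ : 0 < r₁) (hr₂ : 0 < r₂)
    (hne : (J₁, r₁) ≠ (J₂, r₂))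
    (h₁I : dist J₁ I = r₁ + r)
    (h₂I : dist J₂ I = r₂ + r)
    (A B : Pt)
    (hA : A = I + (r / (r + r₁)) • (J₁ - I))
    (hB : B = I + (r / (r + r₂)) • (J₂ - I)) :
    (∃ u₁ u₂ : Set Pt, u₁ ≠ u₂ ∧
      IsCommonExternalTangent u₁ (I, r) (J₁, r₁) (J₂, r₂) ∧
      IsCommonExternalTangent u₂ (I, r) (J₁, r₁) (J₂, r₂)) ↔
    (A + B = (2 : ℝ) • I ∧ r₁ * r₂ = r ^ 2) := by
  have hAB : A + B - (2 : ℝ) • I = (r / (r + r₁)) • (J₁ - I) + (r / (r + r₂)) • (J₂ - I) := by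
    rw [hA, hB]; module
  rw [← sub_eq_zero, hAB]
  have hn₁ : ‖J₁ - I‖ = r₁ + r := by rw [← dist_eq_norm, h₁I]
  have hn₂ : ‖J₂ - I‖ = r₂ + r := by rw [← dist_eq_norm, h₂I]
  constructor
  · rintro ⟨L, L', hLL', hL, hL'⟩
    obtain ⟨u, -, h₁, h₂, rfl⟩ := hL.exists_eq_tangentLine
    obtain ⟨u', -, h₁', h₂', rfl⟩ := hL'.exists_eq_tangentLine
    refine antipodal_and_mul_eq_sq_of_inner_eq finrank_euclideanSpace_fin hr hr₁ hn₁ hn₂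
      (fun h => hne ?_) (fun h => hLL' (congrArg (tangentLine I r) h)) h₁ h₁' h₂ h₂'
    simpa only [Prod.mk.injEq, sub_left_inj] using h
  · rintro ⟨hanti, hprod⟩
    obtain ⟨u, u', huu', hu, hu', h₁, h₁'⟩ := exists_ne_norm_eq_one_inner_eq
      finrank_euclideanSpace_fin (v := J₁ - I) (c := r₁ - r)
      (by rw [hn₁, abs_lt]; constructor <;> linarith)
    exact ⟨_, _, fun h => huu' (tangentLine_injective hr.ne' hu hu' h),
      isCommonExternalTangent_tangentLine hr hr₁ hr₂ hu h₁
        (inner_eq_of_antipodal_of_mul_eq_sq hr hr₁ hr₂ hanti hprod h₁),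
      isCommonExternalTangent_tangentLine hr hr₁ hr₂ hu' h₁'
        (inner_eq_of_antipodal_of_mul_eq_sq hr hr₁ hr₂ hanti hprod h₁')⟩

/-- **Characterization of triples with two common external tangents.**
Two distinct circles `ω₁ = (J₁, r₁)`, `ω₂ = (J₂, r₂)` inscribed in the annulus between
`ω = (I, r)` and `k = (O, R)`, with tangency points `A`, `B` on `ω`, are such that
`ω, ω₁, ω₂` have two distinct common external tangents if and only if `A` and `B` are
antipodal on `ω` and `r₁ * r₂ = r ^ 2`. -/
theorem two_tangents_iff_antipodal_and_product
    (O I : Pt) (R r : ℝ) (hr : 0 < r) (hR : 0 < R)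
    (hinside : dist O I + r < R)
    (J₁ J₂ : Pt) (r₁ r₂ : ℝ) (hr₁ : 0 < r₁) (hr₂ : 0 < r₂)
    (hne : (J₁, r₁) ≠ (J₂, r₂))
    (h₁I : dist J₁ I = r₁ + r) (h₁O : dist J₁ O = R - r₁)
    (h₂I : dist J₂ I = r₂ + r) (h₂O : dist J₂ O = R - r₂)
    (A B : Pt)
    (hA : A = I + (r / (r + r₁)) • (J₁ - I))
    (hB : B = I + (r / (r + r₂)) • (J₂ - I)) :
    (∃ u₁ u₂ : Set Pt, u₁ ≠ u₂ ∧
      IsCommonExternalTangent u₁ (I, r) (J₁, r₁) (J₂, r₂) ∧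
      IsCommonExternalTangent u₂ (I, r) (J₁, r₁) (J₂, r₂)) ↔
    (A + B = (2 : ℝ) • I ∧ r₁ * r₂ = r ^ 2) :=
  two_tangents_iff_antipodal_and_product_general I r hr J₁ J₂ r₁ r₂ hr₁ hr₂ hne h₁I h₂I A B hA hB
end
end

section
/- Let k be a circle with center O and radius R and ω a circle with center I and radius r in the Euclidean plane ℝ², with ω strictly inside k (dist(O,I) + r < R). Let t be a line tangent to ω, and let ω' be a circle with center J and radius r' that is inscribed in the annulus between ω and k, is tangent to t, and whose center J lies strictly on the same side of t as I. Let t' be the image of t under the homothety with center I and ratio 2. Then dist(J, O) + dist(J, I) = R + r (so J lies on the ellipse with foci O, I and major-axis length R + r), and dist(J, I) equals the distance from J to the line t' (so J lies on the parabola with focus I and directrix t'). -/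
open RealInnerProductSpace

noncomputable section

lemma span_perp_eq (u : Pt) (hu : ‖u‖ = 1) :
    ∀ v : Pt, v ≠ 0 → ⟪v, u⟫ = 0 → ∀ w : Pt, ⟪w, u⟫ = 0 → ∃ c : ℝ, w = c • v := by
  intro v hv hvu w hwu
  have hu0 : u ≠ 0 := by intro h; simp [h] at hu
  have hK : Module.finrank ℝ ((ℝ ∙ u)ᗮ : Submodule ℝ Pt) = 1 := by
    have := Submodule.finrank_add_finrank_orthogonal (𝕜 := ℝ) (K := (ℝ ∙ u))
    rw [finrank_span_singleton hu0] at this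
    have h2 : Module.finrank ℝ Pt = 2 := by simp
    omega
  have hvK : v ∈ (ℝ ∙ u)ᗮ := Submodule.mem_orthogonal_singleton_iff_inner_left.mpr hvu
  have hwK : w ∈ (ℝ ∙ u)ᗮ := Submodule.mem_orthogonal_singleton_iff_inner_left.mpr hwu
  have hle : (ℝ ∙ v) ≤ (ℝ ∙ u)ᗮ := by
    rw [Submodule.span_singleton_le_iff_mem]; exact hvK
  have heq : (ℝ ∙ v) = (ℝ ∙ u)ᗮ := by
    apply Submodule.eq_of_le_of_finrank_le hle
    rw [hK, finrank_span_singleton hv]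
  have : w ∈ (ℝ ∙ v) := heq ▸ hwK
  obtain ⟨c, hc⟩ := Submodule.mem_span_singleton.mp this
  exact ⟨c, hc.symm⟩

lemma line_mem_iff {t : Set Pt} (ht : IsLine t) {u X₀ : Pt} (hu : ‖u‖ = 1)
    (hX₀ : X₀ ∈ t) (hperp : ∀ X ∈ t, ∀ Y ∈ t, ⟪X - Y, u⟫ = 0) :
    ∀ X : Pt, X ∈ t ↔ ⟪X - X₀, u⟫ = 0 := by
  obtain ⟨P, v, hv, hteq⟩ := ht
  have hP : P ∈ t := by rw [hteq]; exact ⟨0, by simp⟩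
  have hPv : P + v ∈ t := by rw [hteq]; exact ⟨1, by simp⟩
  have hvu : ⟪v, u⟫ = 0 := by
    have := hperp _ hPv _ hP
    simpa using this
  intro X
  constructor
  · intro hX; exact hperp _ hX _ hX₀
  · intro hXu
    obtain ⟨c, hc⟩ := span_perp_eq u hu v hv hvu (X - X₀) hXu
    obtain ⟨s₀, hs₀⟩ := hteq ▸ hX₀
    rw [hteq]
    rw [sub_eq_iff_eq_add] at hc
    exact ⟨s₀ + c, by rw [hc, hs₀, add_smul]; abel⟩

lemma line_infDist {t : Set Pt} (ht : IsLine t) {u X₀ : Pt} (hu : ‖u‖ = 1)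
    (hX₀ : X₀ ∈ t) (hperp : ∀ X ∈ t, ∀ Y ∈ t, ⟪X - Y, u⟫ = 0) (Q : Pt) :
    Metric.infDist Q t = |⟪Q - X₀, u⟫| := by
  have hmem := line_mem_iff ht hu hX₀ hperp
  apply le_antisymm
  · -- foot point
    set F : Pt := Q - ⟪Q - X₀, u⟫ • u with hF
    have hFt : F ∈ t := by
      rw [hmem]
      have : F - X₀ = (Q - X₀) - ⟪Q - X₀, u⟫ • u := by rw [hF]; abel
      rw [this, inner_sub_left, real_inner_smul_left, real_inner_self_eq_norm_sq, hu]
      ring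
    calc Metric.infDist Q t ≤ dist Q F := Metric.infDist_le_dist_of_mem hFt
      _ = |⟪Q - X₀, u⟫| := by
          rw [dist_eq_norm, hF]
          simp [norm_smul, hu, abs_of_nonneg]
  · by_contra hlt
    push_neg at hlt
    obtain ⟨X, hX, hdX⟩ := (Metric.infDist_lt_iff ⟨X₀, hX₀⟩).mp hlt
    refine absurd hdX (not_lt.mpr ?_)
    have h1 : ⟪Q - X, u⟫ = ⟪Q - X₀, u⟫ := by
      have h2 : ⟪X - X₀, u⟫ = 0 := (hmem X).mp hX
      have : Q - X = (Q - X₀) - (X - X₀) := by abel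
      rw [this, inner_sub_left, h2, sub_zero]
    calc |⟪Q - X₀, u⟫| = |⟪Q - X, u⟫| := by rw [h1]
      _ ≤ ‖Q - X‖ * ‖u‖ := abs_real_inner_le_norm _ _
      _ = dist Q X := by rw [hu, mul_one, dist_eq_norm]

/-- **Ellipse-and-parabola lemma from the proof of the Mixed Poncelet–Steiner theorem.**
If `ω' = (J, r')` is inscribed in the annulus between `ω = (I, r)` and `k = (O, R)`,
is tangent to the line `t` (itself tangent to `ω`), with `J` strictly on the same side of
`t` as `I`, then `J` lies on the ellipse with foci `O, I` and major-axis length `R + r`,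
and `J` is equidistant from `I` and from the line `t'`, the image of `t` under the
homothety with center `I` and ratio `2`; i.e. `J` lies on the parabola with focus `I`
and directrix `t'`. -/
theorem center_on_ellipse_and_parabola
    (O I : Pt) (R r : ℝ) (hr : 0 < r) (hR : 0 < R)
    (hinside : dist O I + r < R)
    (t : Set Pt) (ht : IsLine t) (htan : TangentTo t I r)
    (J : Pt) (r' : ℝ) (hr' : 0 < r')
    (hJI : dist J I = r' + r) (hJO : dist J O = R - r')
    (hJt : TangentTo t J r')
    (hside : StrictSameSide t {I, J})
    (t' : Set Pt) (ht' : t' = (fun X : Pt => I + (2 : ℝ) • (X - I)) '' t) :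
    dist J O + dist J I = R + r ∧ dist J I = Metric.infDist J t' := by
  obtain ⟨u, X₀, hu, hX₀, hperp, hpos⟩ := hside
  have hposI : 0 < ⟪I - X₀, u⟫ := hpos I (by simp)
  have hposJ : 0 < ⟪J - X₀, u⟫ := hpos J (by simp)
  have hdI := line_infDist ht hu hX₀ hperp I
  have hdJ := line_infDist ht hu hX₀ hperp J
  rw [TangentTo] at htan hJt
  have hsI : ⟪I - X₀, u⟫ = r := by
    rw [htan, abs_of_pos hposI] at hdI; exact hdI.symm
  have hsJ : ⟪J - X₀, u⟫ = r' := by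
    rw [hJt, abs_of_pos hposJ] at hdJ; exact hdJ.symm
  refine ⟨by rw [hJO, hJI]; ring, ?_⟩
  set X₁ : Pt := I + (2 : ℝ) • (X₀ - I) with hX₁def
  have hX₁ : X₁ ∈ t' := ht' ▸ ⟨X₀, hX₀, rfl⟩
  have ht'line : IsLine t' := by
    obtain ⟨P, v, hv, hteq⟩ := ht
    refine ⟨I + (2 : ℝ) • (P - I), (2 : ℝ) • v, by simp [hv], ?_⟩
    rw [ht', hteq]; ext Y
    simp only [Set.mem_image, Set.mem_setOf_eq]
    constructor
    · rintro ⟨X, ⟨s, rfl⟩, rfl⟩; exact ⟨s, by module⟩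
    · rintro ⟨s, rfl⟩; exact ⟨P + s • v, ⟨s, rfl⟩, by module⟩
  have ht'perp : ∀ X ∈ t', ∀ Y ∈ t', ⟪X - Y, u⟫ = 0 := by
    rw [ht']; rintro _ ⟨X, hX, rfl⟩ _ ⟨Y, hY, rfl⟩
    have h0 := hperp X hX Y hY
    have h : (I + (2:ℝ) • (X - I)) - (I + (2:ℝ) • (Y - I)) = (2 : ℝ) • (X - Y) := by module
    rw [h, real_inner_smul_left, h0]; ring
  have hdJ' := line_infDist ht'line hu hX₁ ht'perp J
  have hJX₁ : ⟪J - X₁, u⟫ = r' + r := by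
    have h : J - X₁ = (J - X₀) - (X₀ - I) := by rw [hX₁def]; module
    rw [h, inner_sub_left, hsJ]
    have h2 : X₀ - I = -(I - X₀) := by abel
    rw [h2, inner_neg_left, hsI]; ring
  rw [hdJ', hJX₁, hJI, abs_of_pos (by linarith)]
end
end
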